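/- Parallel composition (Theorem 1 of the paper): Let ι be a finite nonempty index set and 𝒳 a type of records, and model datasets as functions D : ι → 𝒳. Let m ≥ 1 and let part : ι → Fin m partition the individuals into m disjoint groups; for a dataset D, let D|_j denote the restriction of D to the subtype {i : ι // part i = j}. For each j ∈ Fin m, let M_j assign to each function on {i // part i = j} a probability measure M_j(·) on a measurable space Ω_j, and suppose each M_j satisfies ε_j-differential privacy with respect to neighbouring restricted datasets (functions on the subtype differing at exactly one index), with ε_j ≥ 0. Then the combined mechanism D ↦ ⊗_{j=1}^m M_j(D|_j) satisfies (max_j ε_j)-differential privacy: for all neighbouring datasets D, D′ and every measurable set S of the product space, (⊗_j M_j(D|_j))(S) ≤ exp(max_j ε_j) · (⊗_j M_j(D′|_j))(S). -/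

import Mathlib

/-!
A neighbouring pair `D, D'` differs at a single individual `i`, so the restrictions `D|ⱼ` and
`D'|ⱼ` coincide on every group `j ≠ part i` and are neighbouring on the group `part i`. Hence
`Mⱼ(D|ⱼ) ≤ Mⱼ(D'|ⱼ)` for `j ≠ part i` and `M_{part i}(D|) ≤ e^{ε (part i)} • M_{part i}(D'|)`.
The product measure is monotone in its factors and scales linearly in any single factor, so
`⊗ⱼ Mⱼ(D|ⱼ) ≤ e^{max ε} • ⊗ⱼ Mⱼ(D'|ⱼ)`.
-/

/-- Two datasets are neighbouring if they differ at exactly one index. -/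
def Neighbouring {ι 𝒳 : Type*} (D D' : ι → 𝒳) : Prop :=
  ∃ i, D i ≠ D' i ∧ ∀ j, j ≠ i → D j = D' j

open MeasureTheory Function
open scoped ENNReal NNReal

namespace MeasureTheory.Measure

variable {ι : Type*} [Fintype ι] {α : ι → Type*} [∀ i, MeasurableSpace (α i)]

theorem pi_mono {μ ν : ∀ i, Measure (α i)} (h : ∀ i, μ i ≤ ν i) :
    Measure.pi μ ≤ Measure.pi ν := by
  have hout : (OuterMeasure.pi fun i => (μ i).toOuterMeasure) ≤
      OuterMeasure.pi fun i => (ν i).toOuterMeasure :=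
    OuterMeasure.le_pi.2 fun s _ =>
      (OuterMeasure.pi_pi_le _ s).trans (Finset.prod_le_prod' fun i _ => h i (s i))
  refine le_iff.2 fun s hs => ?_
  rw [pi_def, pi_def, toMeasure_apply _ _ hs, toMeasure_apply _ _ hs]
  exact hout s

variable [DecidableEq ι]

theorem pi_update_smul (μ : ∀ i, Measure (α i)) [∀ i, SigmaFinite (μ i)] (i : ι) (c : ℝ≥0) :
    Measure.pi (update μ i (c • μ i)) = c • Measure.pi μ := by
  have : ∀ j, SigmaFinite (update μ i (c • μ i) j) := by
    intro j
    rcases eq_or_ne j i with rfl | hj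
    · rw [update_self]; infer_instance
    · rw [update_of_ne hj]; infer_instance
  refine pi_eq fun s hs => ?_
  rw [smul_apply, nnreal_smul_coe_apply, pi_pi]
  symm
  calc ∏ j, update μ i (c • μ i) j (s j)
      = ∏ j, update (fun j => μ j (s j)) i (c * μ i (s i)) j :=
        Finset.prod_congr rfl fun j _ => by
          rcases eq_or_ne j i with rfl | hj <;> simp [*]
    _ = c * μ i (s i) * ∏ j ∈ Finset.univ \ {i}, μ j (s j) :=
        Finset.prod_update_of_mem (Finset.mem_univ i) _ _
    _ = c * ∏ j, μ j (s j) := by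
        rw [mul_assoc, Finset.prod_eq_mul_prod_sdiff_singleton i _ (absurd (Finset.mem_univ i))]

theorem pi_le_smul_pi_of_le_smul {μ ν : ∀ i, Measure (α i)} [∀ i, SigmaFinite (ν i)]
    (i : ι) {c : ℝ≥0} (hi : μ i ≤ c • ν i) (hne : ∀ j ≠ i, μ j = ν j) :
    Measure.pi μ ≤ c • Measure.pi ν := by
  rw [← pi_update_smul]
  refine pi_mono fun j => ?_
  rcases eq_or_ne j i with rfl | hj
  · rwa [update_self]
  · rw [update_of_ne hj, hne j hj]

end MeasureTheory.Measure

section Restriction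

variable {ι 𝒳 : Type*} {p : ι → Prop} {D D' : ι → 𝒳} {i : ι}

theorem neighbouring_subtype_restrict (hi : p i) (hne : D i ≠ D' i)
    (hagree : ∀ j, j ≠ i → D j = D' j) :
    Neighbouring (fun x : Subtype p => D x.1) (fun x => D' x.1) :=
  ⟨⟨i, hi⟩, hne, fun x hx => hagree x fun h => hx (Subtype.ext h)⟩

theorem subtype_restrict_eq (hi : ¬p i) (hagree : ∀ j, j ≠ i → D j = D' j) :
    (fun x : Subtype p => D x.1) = fun x => D' x.1 :=
  funext fun x => hagree x fun h => hi (h ▸ x.2)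

end Restriction

def DifferentiallyPrivate {ι 𝒳 Ω : Type*} [MeasurableSpace Ω]
    (M : (ι → 𝒳) → Measure Ω) (ε : ℝ) : Prop :=
  ∀ D D' : ι → 𝒳, Neighbouring D D' → ∀ S : Set Ω, MeasurableSet S →
    M D S ≤ ENNReal.ofReal (Real.exp ε) * M D' S

namespace DifferentiallyPrivate

variable {ι 𝒳 Ω : Type*} [MeasurableSpace Ω] {M : (ι → 𝒳) → Measure Ω} {ε ε' : ℝ}

theorem mono (h : DifferentiallyPrivate M ε) (hε : ε ≤ ε') : DifferentiallyPrivate M ε' :=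
  fun D D' hD S hS => (h D D' hD S hS).trans <| by gcongr

theorem le_smul (h : DifferentiallyPrivate M ε) {D D' : ι → 𝒳} (hD : Neighbouring D D') :
    M D ≤ (Real.exp ε).toNNReal • M D' :=
  Measure.le_iff.2 fun S hS => by
    rw [Measure.smul_apply, Measure.nnreal_smul_coe_apply]
    exact h D D' hD S hS

end DifferentiallyPrivate

theorem parallel_composition_general {ι 𝒳 : Type*} [Fintype ι]
    (m : ℕ) (hm : 1 ≤ m) (part : ι → Fin m)
    (Ω : Fin m → Type*) [∀ j, MeasurableSpace (Ω j)]
    (M : ∀ j : Fin m, ({i : ι // part i = j} → 𝒳) → Measure (Ω j))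
    (hMprob : ∀ j E, IsProbabilityMeasure (M j E))
    (ε : Fin m → ℝ)
    (hM : ∀ j : Fin m, ∀ E E' : {i : ι // part i = j} → 𝒳, Neighbouring E E' →
      ∀ S : Set (Ω j), MeasurableSet S →
        M j E S ≤ ENNReal.ofReal (Real.exp (ε j)) * M j E' S) :
    ∀ D D' : ι → 𝒳, Neighbouring D D' → ∀ S : Set (∀ j, Ω j), MeasurableSet S →
      Measure.pi (fun j => M j (fun i => D i.1)) S ≤
        ENNReal.ofReal
            (Real.exp (Finset.univ.sup'
              (Finset.univ_nonempty_iff.mpr ⟨⟨0, hm⟩⟩) ε)) *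
          Measure.pi (fun j => M j (fun i => D' i.1)) S := by
  rintro D D' ⟨i, hne, hagree⟩ S -
  have hmax := Finset.le_sup' ε (Finset.mem_univ (part i))
  calc _ ≤ ((Real.exp _).toNNReal • Measure.pi fun j => M j fun x => D' x.1) S :=
        Measure.pi_le_smul_pi_of_le_smul (part i) ?_ ?_ S
    _ = _ := by rw [Measure.smul_apply, Measure.nnreal_smul_coe_apply]; rfl
  · exact (DifferentiallyPrivate.mono (hM _) hmax).le_smul
      (neighbouring_subtype_restrict rfl hne hagree)
  · intro j hj
    rw [subtype_restrict_eq (p := (part · = j)) hj.symm hagree]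

/-- Parallel composition: partition the individuals into `m` groups via
`part : ι → Fin m`, and apply the mechanism `M j` (which is `ε j`-differentially
private on its own group) to the restriction of the dataset to group `j`.
Then the combined mechanism `D ↦ ⊗ⱼ Mⱼ(D|ⱼ)` is `(max_j ε j)`-differentially
private. -/
theorem parallel_composition {ι 𝒳 : Type*} [Fintype ι] [Nonempty ι]
    (m : ℕ) (hm : 1 ≤ m) (part : ι → Fin m)
    (Ω : Fin m → Type*) [∀ j, MeasurableSpace (Ω j)]
    (M : ∀ j : Fin m, ({i : ι // part i = j} → 𝒳) → Measure (Ω j))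
    (hMprob : ∀ j E, IsProbabilityMeasure (M j E))
    (ε : Fin m → ℝ) (hε : ∀ j, 0 ≤ ε j)
    (hM : ∀ j : Fin m, ∀ E E' : {i : ι // part i = j} → 𝒳, Neighbouring E E' →
      ∀ S : Set (Ω j), MeasurableSet S →
        M j E S ≤ ENNReal.ofReal (Real.exp (ε j)) * M j E' S) :
    ∀ D D' : ι → 𝒳, Neighbouring D D' → ∀ S : Set (∀ j, Ω j), MeasurableSet S →
      Measure.pi (fun j => M j (fun i => D i.1)) S ≤
        ENNReal.ofReal
            (Real.exp (Finset.univ.sup'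
              (Finset.univ_nonempty_iff.mpr ⟨⟨0, hm⟩⟩) ε)) *
          Measure.pi (fun j => M j (fun i => D' i.1)) S :=
  parallel_composition_general m hm part Ω M hMprob ε hM
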